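/- arXiv:2208.11181 — 5 statements merged into one kernel-verified Lean document; each statement's English description precedes it below -/
import Mathlib

section
/- If G is a graph with degeneracy d ≥ 1, then its two-color Ramsey number satisfies r(G) ≥ 2^{d/2}. -/
open Finset

/-- A two-coloring `col` of the edges of `K_N` contains a monochromatic copy of `G` in color `c`. -/
def HasMonoCopy {V : Type*} {N : ℕ} (G : SimpleGraph V) (col : Sym2 (Fin N) → Bool)
    (c : Bool) : Prop :=
  ∃ f : V → Fin N, Function.Injective f ∧ ∀ u v : V, G.Adj u v → col s(f u, f v) = c

/-- The two-color Ramsey number of a graph `G`. -/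
noncomputable def ramsey {V : Type*} (G : SimpleGraph V) : ℕ :=
  sInf {N | ∀ col : Sym2 (Fin N) → Bool, ∃ c : Bool, HasMonoCopy G col c}

/-- `q`-coloring version of containing a monochromatic copy. -/
def HasMonoCopyMulti {V : Type*} {N q : ℕ} (G : SimpleGraph V) (col : Sym2 (Fin N) → Fin q)
    (c : Fin q) : Prop :=
  ∃ f : V → Fin N, Function.Injective f ∧ ∀ u v : V, G.Adj u v → col s(f u, f v) = c

/-- The `q`-color Ramsey number of a graph `G`. -/
noncomputable def ramseyMulti {V : Type*} (G : SimpleGraph V) (q : ℕ) : ℕ :=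
  sInf {N | ∀ col : Sym2 (Fin N) → Fin q, ∃ c : Fin q, HasMonoCopyMulti G col c}

/-- The `n`-vertex graph consisting of a clique `K_k` together with `n - k` isolated vertices. -/
def Hgraph (k n : ℕ) : SimpleGraph (Fin n) where
  Adj u v := u ≠ v ∧ (u : ℕ) < k ∧ (v : ℕ) < k
  symm := ⟨by rintro u v ⟨h1, h2, h3⟩; exact ⟨h1.symm, h3, h2⟩⟩
  loopless := ⟨by rintro u ⟨h, -⟩; exact h rfl⟩

/-- The `(n+1)`-vertex graph obtained from `Hgraph k n` by adding an apex vertex (the vertex `n`)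
adjacent to all other vertices. -/
def Ggraph (k n : ℕ) : SimpleGraph (Fin (n + 1)) where
  Adj u v := u ≠ v ∧ ((u : ℕ) = n ∨ (v : ℕ) = n ∨ ((u : ℕ) < k ∧ (v : ℕ) < k))
  symm := ⟨by rintro u v ⟨h1, h2⟩; exact ⟨h1.symm, by tauto⟩⟩
  loopless := ⟨by rintro u ⟨h, -⟩; exact h rfl⟩

/-- The disjoint union of `n / k` copies of `K_k` (blocks of `k` consecutive vertices). -/
def Hgraph' (k n : ℕ) : SimpleGraph (Fin n) where
  Adj u v := u ≠ v ∧ (u : ℕ) / k = (v : ℕ) / k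
  symm := ⟨by rintro u v ⟨h1, h2⟩; exact ⟨h1.symm, h2.symm⟩⟩
  loopless := ⟨by rintro u ⟨h, -⟩; exact h rfl⟩

/-- `G` is `d`-degenerate: every nonempty set of vertices contains a vertex with at most `d`
neighbors inside the set. -/
def Degenerate {V : Type*} (G : SimpleGraph V) (d : ℕ) : Prop :=
  ∀ s : Set V, s.Nonempty → ∃ v ∈ s, {u ∈ s | G.Adj v u}.ncard ≤ d

/-- The degeneracy of `G`: the least `d` such that `G` is `d`-degenerate. -/
noncomputable def degeneracy {V : Type*} (G : SimpleGraph V) : ℕ :=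
  sInf {d | Degenerate G d}

/-- The number of edges of `K_N` receiving color `c` under the coloring `col`. -/
noncomputable def colorEdgeCount {N : ℕ} (col : Sym2 (Fin N) → Bool) (c : Bool) : ℕ :=
  {e : Sym2 (Fin N) | ¬ e.IsDiag ∧ col e = c}.ncard

/-- The set of vertices joined to `v` by an edge of color `c`. -/
def colorNbr {N : ℕ} (col : Sym2 (Fin N) → Bool) (c : Bool) (v : Fin N) : Finset (Fin N) :=
  Finset.univ.filter fun u => u ≠ v ∧ col s(v, u) = c


/-!
A graph of degeneracy `d` has a nonempty induced subgraph `H` of minimum degree at least `d`; with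
`m` vertices it has at least `md/2` edges. If `N² < 2^d`, the expected number of monochromatic
copies of `H` in a uniformly random coloring of `K_{N+1}` is
`2 (N+1)_m 2^{-e(H)} < 2 N^m 2^{-md/2} < 2`, so some coloring has at most one, and deleting a
vertex of that copy leaves a coloring of `K_N` with none. Passing through `K_{N+1}` absorbs the factor `2` coming from the two colors.
Finiteness of `r(G)` itself comes from the Erdős–Szekeres greedy argument.
-/

open SimpleGraph

theorem card_filter_forall_mem_eq_mul_pow {α β : Type*} [Fintype α] [DecidableEq α] [Fintype β]
    [DecidableEq β] (T : Finset α) (b : β) :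
    #{g : α → β | ∀ a ∈ T, g a = b} * Fintype.card β ^ #T = Fintype.card β ^ Fintype.card α := by
  have hpi : ({g : α → β | ∀ a ∈ T, g a = b} : Finset (α → β)) =
      Fintype.piFinset fun a => if a ∈ T then {b} else univ := by
    ext g
    simp only [mem_filter, mem_univ, true_and, Fintype.mem_piFinset]
    refine forall_congr' fun a => ?_
    split_ifs with ha <;> simp [ha]
  rw [hpi, Fintype.card_piFinset, ← card_compl_add_card T, pow_add]
  simp only [apply_ite card, card_singleton, card_univ, prod_ite, prod_const_one, one_mul,
    prod_const, filter_not, filter_mem_eq_inter, univ_inter, compl_eq_univ_sdiff]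

theorem Nat.succ_descFactorial_le_pow (N : ℕ) {m : ℕ} (hm : 3 ≤ m) :
    (N + 1).descFactorial m ≤ N ^ m := by
  induction m, hm using Nat.le_induction with
  | base =>
    simp only [Nat.succ_descFactorial_succ, Nat.descFactorial_succ, Nat.descFactorial_zero]
    cases N with
    | zero => simp
    | succ n => simp only [Nat.add_sub_cancel, Nat.sub_zero, mul_one]; ring_nf; omega
  | succ k hk ih =>
    rw [Nat.descFactorial_succ, pow_succ']
    exact Nat.mul_le_mul (by omega) ih

theorem exists_pairwise_list_of_two_pow_le {α : Type*} [DecidableEq α] (col : Sym2 α → Bool)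
    (k : ℕ) : ∀ A : Finset α, 2 ^ k ≤ #A + 1 → ∃ l : List (α × Bool), l.length = k ∧
      (∀ p ∈ l, p.1 ∈ A) ∧ l.Pairwise fun p q => p.1 ≠ q.1 ∧ col s(p.1, q.1) = p.2 := by
  induction k with
  | zero => exact fun _ _ => ⟨[], rfl, by simp, .nil⟩
  | succ k ih =>
    intro A hA
    obtain ⟨v, hv⟩ : A.Nonempty := card_pos.1 (by have := Nat.one_le_two_pow (n := k); omega)
    obtain ⟨c, -, hc⟩ := exists_le_card_fiber_of_mul_le_card_of_maps_to
      (s := A.erase v) (t := univ) (f := fun u => col s(v, u)) (n := 2 ^ k - 1)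
      (fun _ _ => mem_univ _) univ_nonempty
      (by rw [card_erase_of_mem hv, card_univ, Fintype.card_bool]; omega)
    obtain ⟨l, hlen, hmem, hpair⟩ := ih {u ∈ A.erase v | col s(v, u) = c} (by omega)
    refine ⟨(v, c) :: l, by simp [hlen], ?_, List.pairwise_cons.2 ⟨fun q hq => ?_, hpair⟩⟩
    · simp only [List.mem_cons, forall_eq_or_imp]
      exact ⟨hv, fun p hp => mem_of_mem_erase (mem_filter.1 (hmem p hp)).1⟩
    · obtain ⟨hqA, hqc⟩ := mem_filter.1 (hmem q hq)
      exact ⟨(ne_of_mem_erase hqA).symm, hqc⟩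

theorem exists_pairwise_finset_of_two_pow_le {α : Type*} [Fintype α] [DecidableEq α]
    (col : Sym2 α → Bool) {n : ℕ} (h : 2 ^ (2 * n) ≤ Fintype.card α + 1) :
    ∃ c, ∃ B : Finset α, n ≤ #B ∧ (B : Set α).Pairwise fun x y => col s(x, y) = c := by
  obtain ⟨l, hlen, -, hpair⟩ := exists_pairwise_list_of_two_pow_le col (2 * n) univ h
  obtain ⟨c, hc⟩ : ∃ c : Bool, n ≤ (l.filter (·.2 == c)).length := by
    have := List.length_eq_length_filter_add (l := l) (·.2)
    by_cases hn : n ≤ (l.filter (·.2)).length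
    · exact ⟨true, by simpa using hn⟩
    · exact ⟨false, by simp only [beq_false] at this ⊢; omega⟩
  set L := (l.filter (·.2 == c)).map Prod.fst
  have hL : L.Pairwise fun x y => x ≠ y ∧ col s(x, y) = c :=
    List.pairwise_map.2 <| (hpair.filter _).imp_of_mem fun ha _ hab =>
      ⟨hab.1, hab.2.trans (by simpa using (List.mem_filter.1 ha).2)⟩
  have hnd : L.Nodup := hL.imp And.left
  have : Std.Symm fun x y => col s(x, y) = c := ⟨fun x y h => by rwa [Sym2.eq_swap]⟩
  refine ⟨c, L.toFinset, ?_, ?_⟩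
  · rw [List.toFinset_card_of_nodup hnd]
    simpa [L] using hc
  · rw [List.coe_toFinset]
    exact hnd.pairwise_coe.2 (hL.imp And.right)

theorem exists_forall_hasMonoCopy {V : Type*} [Fintype V] (G : SimpleGraph V) :
    ∃ N, ∀ col : Sym2 (Fin N) → Bool, ∃ c, HasMonoCopy G col c := by
  refine ⟨2 ^ (2 * Fintype.card V), fun col => ?_⟩
  obtain ⟨c, B, hB, hmono⟩ :=
    exists_pairwise_finset_of_two_pow_le col (n := Fintype.card V) (by simp)
  obtain ⟨e⟩ := Function.Embedding.nonempty_of_card_le (α := V) (β := B) (by simpa using hB)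
  refine ⟨c, (↑) ∘ e, Subtype.val_injective.comp e.injective, fun u v huv => ?_⟩
  exact hmono (e u).2 (e v).2 (Subtype.val_injective.ne (e.injective.ne huv.ne))

theorem hasMonoCopy_ramsey {V : Type*} [Fintype V] (G : SimpleGraph V)
    (col : Sym2 (Fin (ramsey G)) → Bool) : ∃ c, HasMonoCopy G col c :=
  Nat.sInf_mem (exists_forall_hasMonoCopy G) col

theorem HasMonoCopy.comap {V W : Type*} {N : ℕ} {G : SimpleGraph V} {H : SimpleGraph W}
    {col : Sym2 (Fin N) → Bool} {c : Bool} (h : HasMonoCopy G col c) (φ : H ↪g G) :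
    HasMonoCopy H col c :=
  let ⟨f, hf, hmono⟩ := h
  ⟨f ∘ φ, hf.comp φ.injective, fun _ _ huv => hmono _ _ (φ.map_adj_iff.2 huv)⟩

section MonoEmbeddings

variable {W : Type*} [Fintype W] (H : SimpleGraph W) [DecidableRel H.Adj]

noncomputable def monoEmbeddings {M : ℕ} (col : Sym2 (Fin M) → Bool) :
    Finset ((W ↪ Fin M) × Bool) :=
  {p | ∀ u v, H.Adj u v → col s(p.1 u, p.1 v) = p.2}

theorem mem_monoEmbeddings_iff {M : ℕ} {col : Sym2 (Fin M) → Bool} {f : W ↪ Fin M} {c : Bool} :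
    (f, c) ∈ monoEmbeddings H col ↔ ∀ u v, H.Adj u v → col s(f u, f v) = c := by
  simp [monoEmbeddings]

theorem card_filter_mem_monoEmbeddings_mul {M : ℕ} (p : (W ↪ Fin M) × Bool) :
    #{col | p ∈ monoEmbeddings H col} * 2 ^ #H.edgeFinset = 2 ^ Fintype.card (Sym2 (Fin M)) := by
  have hfix : filter (fun col : Sym2 (Fin M) → Bool => p ∈ monoEmbeddings H col) univ =
      filter (fun col => ∀ e ∈ H.edgeFinset.map p.1.sym2Map, col e = p.2) univ := by
    ext col
    simp only [monoEmbeddings, mem_filter, mem_univ, true_and, forall_mem_map, mem_edgeFinset,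
      Sym2.forall, mem_edgeSet, Function.Embedding.sym2Map_apply, Sym2.map_mk]
  rw [hfix, ← card_map p.1.sym2Map, ← Fintype.card_bool]
  exact card_filter_forall_mem_eq_mul_pow _ _

theorem exists_card_monoEmbeddings_le_one {M : ℕ}
    (h : M.descFactorial (Fintype.card W) < 2 ^ #H.edgeFinset) :
    ∃ col : Sym2 (Fin M) → Bool, #(monoEmbeddings H col) ≤ 1 := by
  set K := Fintype.card (Sym2 (Fin M))
  have hcount : (∑ col : Sym2 (Fin M) → Bool, #(monoEmbeddings H col)) * 2 ^ #H.edgeFinset =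
      2 * M.descFactorial (Fintype.card W) * 2 ^ K := by
    have hswap := sum_card_bipartiteAbove_eq_sum_card_bipartiteBelow (s := univ) (t := univ)
      (r := fun col (p : (W ↪ Fin M) × Bool) => p ∈ monoEmbeddings H col)
    simp only [bipartiteAbove, bipartiteBelow, filter_univ_mem] at hswap
    rw [hswap, sum_mul]
    simp only [card_filter_mem_monoEmbeddings_mul, sum_const, card_univ, Fintype.card_prod,
      Fintype.card_embedding_eq, Fintype.card_fin, Fintype.card_bool, smul_eq_mul]
    ring
  obtain ⟨col, -, hcol⟩ := exists_lt_of_sum_lt (s := univ)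
    (f := fun col : Sym2 (Fin M) → Bool => #(monoEmbeddings H col)) (g := fun _ => 2) <| by
    refine lt_of_mul_lt_mul_right (a := 2 ^ #H.edgeFinset) ?_ (Nat.zero_le _)
    rw [hcount, sum_const, card_univ, Fintype.card_fun, Fintype.card_bool, smul_eq_mul]
    linarith [Nat.mul_lt_mul_of_pos_right h (Nat.two_pow_pos K)]
  exact ⟨col, Nat.le_of_lt_succ hcol⟩

theorem exists_forall_not_hasMonoCopy_of_card_monoEmbeddings_le_one [Nonempty W] {N : ℕ}
    (col : Sym2 (Fin (N + 1)) → Bool) (h : #(monoEmbeddings H col) ≤ 1) :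
    ∃ col' : Sym2 (Fin N) → Bool, ∀ c, ¬HasMonoCopy H col' c := by
  obtain ⟨w, hw⟩ : ∃ w, ∀ p ∈ monoEmbeddings H col, w ∈ Set.range p.1 := by
    rcases (monoEmbeddings H col).eq_empty_or_nonempty with hempty | ⟨p₀, hp₀⟩
    · exact ⟨0, by simp [hempty]⟩
    · exact ⟨p₀.1 (Classical.arbitrary W), fun p hp => card_le_one.1 h p hp p₀ hp₀ ▸ ⟨_, rfl⟩⟩
  refine ⟨fun e => col (e.map w.succAbove), fun c ⟨f, hf, hmono⟩ => ?_⟩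
  obtain ⟨u, hu⟩ := hw (Function.Embedding.trans ⟨f, hf⟩ w.succAboveEmb, c) <|
    (mem_monoEmbeddings_iff H).2 fun u v huv => by simpa using hmono u v huv
  exact w.succAbove_ne _ hu

theorem pow_card_lt_two_pow_card_edgeFinset [Nonempty W] {N d : ℕ} (hdeg : ∀ v, d ≤ H.degree v)
    (hN : N ^ 2 < 2 ^ d) : N ^ Fintype.card W < 2 ^ #H.edgeFinset := by
  refine lt_of_pow_lt_pow_left₀ 2 (Nat.zero_le _) ?_
  calc (N ^ Fintype.card W) ^ 2 = (N ^ 2) ^ Fintype.card W := by ring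
    _ < (2 ^ d) ^ Fintype.card W := pow_lt_pow_left₀ hN (Nat.zero_le _) Fintype.card_ne_zero
    _ ≤ 2 ^ ∑ v, H.degree v := by
      rw [← pow_mul]
      refine Nat.pow_le_pow_right two_pos ?_
      simpa [mul_comm] using card_nsmul_le_sum univ _ _ fun v _ => hdeg v
    _ = (2 ^ #H.edgeFinset) ^ 2 := by rw [sum_degrees_eq_twice_card_edges, pow_mul']

theorem exists_forall_not_hasMonoCopy [Nonempty W] {N d : ℕ} (hdeg : ∀ v, d ≤ H.degree v)
    (hN : N ^ 2 < 2 ^ d) : ∃ col : Sym2 (Fin N) → Bool, ∀ c, ¬HasMonoCopy H col c := by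
  by_cases hNW : N < Fintype.card W
  · exact ⟨fun _ => true, fun _ ⟨f, hf, _⟩ =>
      hNW.not_ge (by simpa using Fintype.card_le_of_injective f hf)⟩
  have hdW : d < Fintype.card W :=
    (hdeg (Classical.arbitrary W)).trans_lt (H.degree_lt_card_verts _)
  -- `(N + 1).descFactorial m ≤ N ^ m` needs `m ≥ 3`; smaller `H` cannot fit into `K_N` at all.
  have hW : 3 ≤ Fintype.card W := by
    by_contra! hW
    have hd1 : d ≤ 1 := by omega
    have hN1 : N ≤ 1 := by nlinarith [Nat.pow_le_pow_right two_pos hd1]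
    interval_cases N <;> interval_cases d <;> omega
  obtain ⟨col, hcol⟩ := exists_card_monoEmbeddings_le_one H (M := N + 1) <|
    (Nat.succ_descFactorial_le_pow N hW).trans_lt (pow_card_lt_two_pow_card_edgeFinset H hdeg hN)
  exact exists_forall_not_hasMonoCopy_of_card_monoEmbeddings_le_one H col hcol

end MonoEmbeddings

theorem exists_nonempty_forall_le_ncard_adj {V : Type*} {G : SimpleGraph V} {d : ℕ}
    (hd : d ≤ degeneracy G) (hd1 : 1 ≤ d) :
    ∃ s : Set V, s.Nonempty ∧ ∀ v ∈ s, d ≤ {u ∈ s | G.Adj v u}.ncard := by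
  have hnot : ¬Degenerate G (d - 1) := fun h => by
    have := Nat.sInf_le (s := {d | Degenerate G d}) h
    rw [← degeneracy] at this
    omega
  simp only [Degenerate, not_forall, not_exists, not_and, not_le] at hnot
  obtain ⟨s, hs, hdeg⟩ := hnot
  exact ⟨s, hs, fun v hv => by have := hdeg v hv; omega⟩

theorem SimpleGraph.degree_induce {V : Type*} (G : SimpleGraph V) (s : Set V) (v : s)
    [Fintype ((G.induce s).neighborSet v)] :
    (G.induce s).degree v = {u ∈ s | G.Adj v u}.ncard := by
  rw [← card_neighborSet_eq_degree, ← Nat.card_eq_fintype_card, Nat.card_coe_set_eq,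
    ← Set.ncard_image_of_injective _ Subtype.val_injective]
  congr 1
  ext u
  simp [and_comm]

theorem Real.rpow_div_two_le_of_pow_le_sq {x y : ℝ} {d : ℕ} (hx : 0 ≤ x) (hy : 0 ≤ y)
    (h : x ^ d ≤ y ^ 2) : x ^ ((d : ℝ) / 2) ≤ y := by
  rw [Real.rpow_div_two_eq_sqrt _ hx, Real.rpow_natCast,
    ← pow_le_pow_iff_left₀ (by positivity) hy two_ne_zero, ← pow_mul, mul_comm, pow_mul,
    Real.sq_sqrt hx]
  exact h

theorem ramsey_ge_of_degeneracy {V : Type*} [Fintype V] (G : SimpleGraph V) (d : ℕ)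
    (hd : degeneracy G = d) (hd1 : 1 ≤ d) :
    (2 : ℝ) ^ ((d : ℝ) / 2) ≤ ramsey G := by
  classical
  obtain ⟨s, hs, hdeg⟩ := exists_nonempty_forall_le_ncard_adj hd.ge hd1
  have : Nonempty s := hs.to_subtype
  refine Real.rpow_div_two_le_of_pow_le_sq zero_le_two (Nat.cast_nonneg _) ?_
  refine mod_cast le_of_not_gt fun hlt => ?_
  obtain ⟨col, hcol⟩ := exists_forall_not_hasMonoCopy (G.induce s)
    (fun v => (G.degree_induce s v).symm ▸ hdeg v v.2) hlt
  obtain ⟨c, hc⟩ := hasMonoCopy_ramsey G col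
  exact hcol c (hc.comap (Embedding.induce s))
end

section
/- Let 0 < ε ≤ 1/2 and fix a two-coloring of the edges of K_N in colors red and blue in which each color class has at least ε·binom(N,2) edges. Then there exist vertices v and w such that the number of vertices that are simultaneously red-adjacent to v and blue-adjacent to w is at least (ε/4)·(N−1). -/
open Finset

variable {N : ℕ} (col : Sym2 (Fin N) → Bool)

lemma mem_colorNbr {c : Bool} {v u : Fin N} :
    u ∈ colorNbr col c v ↔ u ≠ v ∧ col s(v, u) = c := by
  simp [colorNbr]

lemma mem_colorNbr_comm {c : Bool} {v u : Fin N} :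
    u ∈ colorNbr col c v ↔ v ∈ colorNbr col c u := by
  rw [mem_colorNbr, mem_colorNbr]
  constructor
  · rintro ⟨h1, h2⟩; exact ⟨h1.symm, by rwa [Sym2.eq_swap]⟩
  · rintro ⟨h1, h2⟩; exact ⟨h1.symm, by rwa [Sym2.eq_swap]⟩

def colGraph (c : Bool) : SimpleGraph (Fin N) where
  Adj u v := u ≠ v ∧ col s(u, v) = c
  symm := ⟨by rintro u v ⟨h1, h2⟩; exact ⟨h1.symm, by rwa [Sym2.eq_swap]⟩⟩
  loopless := ⟨by rintro u ⟨h, -⟩; exact h rfl⟩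

instance (c : Bool) : DecidableRel (colGraph col c).Adj :=
  fun u v => inferInstanceAs (Decidable (u ≠ v ∧ col s(u, v) = c))

lemma neighborFinset_colGraph (c : Bool) (v : Fin N) :
    (colGraph col c).neighborFinset v = colorNbr col c v := by
  ext u
  simp only [SimpleGraph.mem_neighborFinset, mem_colorNbr]
  show (v ≠ u ∧ col s(v, u) = c) ↔ _
  rw [ne_comm]

lemma handshake (c : Bool) :
    ∑ v, (colorNbr col c v).card = 2 * colorEdgeCount col c := by
  have h1 : {e : Sym2 (Fin N) | ¬ e.IsDiag ∧ col e = c} = (colGraph col c).edgeSet := by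
    ext e
    induction e using Sym2.ind with
    | _ a b =>
      simp only [Set.mem_setOf_eq, SimpleGraph.mem_edgeSet, Sym2.isDiag_iff_proj_eq]
      exact Iff.rfl
  have h2 : colorEdgeCount col c = (colGraph col c).edgeFinset.card := by
    rw [colorEdgeCount, h1, SimpleGraph.edgeFinset, Set.ncard_eq_toFinset_card']
  rw [h2, ← SimpleGraph.sum_degrees_eq_twice_card_edges]
  refine Finset.sum_congr rfl fun v _ => ?_
  rw [SimpleGraph.degree, neighborFinset_colGraph]

lemma deg_add (u : Fin N) :
    (colorNbr col true u).card + (colorNbr col false u).card = N - 1 := by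
  have hd : Disjoint (colorNbr col true u) (colorNbr col false u) := by
    rw [Finset.disjoint_left]
    intro x hx hx'
    rw [mem_colorNbr] at hx hx'
    rw [hx.2] at hx'
    exact absurd hx'.2 (by simp)
  rw [← Finset.card_union_of_disjoint hd]
  have : colorNbr col true u ∪ colorNbr col false u = Finset.univ.erase u := by
    ext x
    simp only [Finset.mem_union, mem_colorNbr, Finset.mem_erase, Finset.mem_univ, and_true]
    cases h : col s(u, x) <;> tauto
  rw [this, Finset.card_erase_of_mem (Finset.mem_univ u), Finset.card_univ, Fintype.card_fin]

lemma sum_inter (c : Bool) (B : Finset (Fin N)) :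
    ∑ v, (colorNbr col c v ∩ B).card = ∑ u ∈ B, (colorNbr col c u).card := by
  have h1 : ∀ v, (colorNbr col c v ∩ B).card = ∑ u ∈ B, if u ∈ colorNbr col c v then 1 else 0 := by
    intro v
    rw [← Finset.card_filter]
    congr 1
    ext x
    simp only [Finset.mem_inter, Finset.mem_filter]
    tauto
  simp only [h1]
  rw [Finset.sum_comm]
  refine Finset.sum_congr rfl fun u hu => ?_
  have h2 : ∀ v : Fin N, (if u ∈ colorNbr col c v then 1 else 0)
      = (if v ∈ colorNbr col c u then 1 else 0) := by
    intro v
    by_cases h : u ∈ colorNbr col c v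
    · rw [if_pos h, if_pos (mem_colorNbr_comm col |>.mp h)]
    · rw [if_neg h, if_neg (fun hc => h (mem_colorNbr_comm col |>.mpr hc))]
  simp only [h2]
  rw [← Finset.card_filter]
  congr 1
  exact Finset.filter_univ_mem _

lemma exists_pos (hR : ∃ a b : Fin N, a ≠ b ∧ col s(a, b) = true)
    (hB : ∃ a b : Fin N, a ≠ b ∧ col s(a, b) = false) :
    ∃ v w : Fin N, 1 ≤ (colorNbr col true v ∩ colorNbr col false w).card := by
  obtain ⟨a, b, hab, hcr⟩ := hR
  by_cases h : ∃ z, z ≠ b ∧ col s(b, z) = false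
  · obtain ⟨z, hz, hcz⟩ := h
    refine ⟨a, z, Finset.card_pos.mpr ⟨b, ?_⟩⟩
    rw [Finset.mem_inter, mem_colorNbr, mem_colorNbr]
    exact ⟨⟨hab.symm, hcr⟩, ⟨hz.symm, by rwa [Sym2.eq_swap]⟩⟩
  · push_neg at h
    obtain ⟨x, y, hxy, hcb⟩ := hB
    have hxb : x ≠ b := by
      rintro rfl
      have := h y hxy.symm
      rw [hcb] at this
      exact absurd this (by simp)
    have hcolbx : col s(b, x) = true := by
      have := h x hxb
      cases hc : col s(b, x)
      · exact absurd hc this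
      · rfl
    refine ⟨b, y, Finset.card_pos.mpr ⟨x, ?_⟩⟩
    rw [Finset.mem_inter, mem_colorNbr, mem_colorNbr]
    exact ⟨⟨hxb, hcolbx⟩, ⟨hxy, by rwa [Sym2.eq_swap]⟩⟩

theorem balanced_common_nbhd (N : ℕ) (hN : 1 ≤ N) (ε : ℝ) (hε0 : 0 < ε) (hε : ε ≤ 1 / 2)
    (col : Sym2 (Fin N) → Bool)
    (hbal : ∀ c : Bool, ε * (N.choose 2) ≤ (colorEdgeCount col c : ℝ)) :
    ∃ v w : Fin N,
      (ε / 4) * ((N : ℝ) - 1) ≤ ((colorNbr col true v ∩ colorNbr col false w).card : ℝ) := by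
  have hN1 : (1 : ℝ) ≤ (N : ℝ) := by exact_mod_cast hN
  rcases eq_or_lt_of_le hN with hNone | hN2
  · refine ⟨⟨0, by omega⟩, ⟨0, by omega⟩, ?_⟩
    have hz : ((N : ℝ) - 1) = 0 := by rw [← hNone]; norm_num
    rw [hz, mul_zero]
    positivity
  have hNpos : (0 : ℝ) < N := by linarith
  have hinst : NeZero N := ⟨by omega⟩
  have hNe : (Finset.univ : Finset (Fin N)).Nonempty := Finset.univ_nonempty
  -- degrees
  set dR : Fin N → ℕ := fun v => (colorNbr col true v).card with hdR
  set dB : Fin N → ℕ := fun v => (colorNbr col false v).card with hdB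
  have hdeg : ∀ u, (dR u : ℝ) + (dB u : ℝ) = (N : ℝ) - 1 := by
    intro u
    have := deg_add col u
    have : (dR u + dB u : ℝ) = ((N - 1 : ℕ) : ℝ) := by exact_mod_cast congrArg (Nat.cast (R := ℝ)) this
    rwa [Nat.cast_sub hN, Nat.cast_one] at this
  -- handshake sums
  have hsum : ∀ c : Bool, ε * (N : ℝ) * ((N : ℝ) - 1) ≤ ∑ v, ((colorNbr col c v).card : ℝ) := by
    intro c
    have h1 : (∑ v, ((colorNbr col c v).card : ℝ)) = 2 * (colorEdgeCount col c : ℝ) := by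
      push_cast [← Nat.cast_sum]
      exact_mod_cast congrArg (Nat.cast (R := ℝ)) (handshake col c)
    have h2 := hbal c
    rw [Nat.cast_choose_two] at h2
    rw [h1]
    nlinarith [h2]
  -- max degree vertices
  obtain ⟨vR, -, hvR⟩ := Finset.exists_max_image Finset.univ dR hNe
  obtain ⟨wB, -, hwB⟩ := Finset.exists_max_image Finset.univ dB hNe
  have hmaxR : ∀ u, (dR u : ℝ) ≤ (dR vR : ℝ) := fun u => by
    exact_mod_cast hvR u (Finset.mem_univ u)
  have hmaxB : ∀ u, (dB u : ℝ) ≤ (dB wB : ℝ) := fun u => by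
    exact_mod_cast hwB u (Finset.mem_univ u)
  have hΔR : ε * ((N : ℝ) - 1) ≤ (dR vR : ℝ) := by
    have h1 : (∑ v, ((colorNbr col true v).card : ℝ)) ≤ (N : ℝ) * (dR vR : ℝ) := by
      calc (∑ v, ((colorNbr col true v).card : ℝ)) ≤ ∑ _v : Fin N, (dR vR : ℝ) :=
            Finset.sum_le_sum fun v _ => hmaxR v
        _ = (N : ℝ) * (dR vR : ℝ) := by
            rw [Finset.sum_const, Finset.card_univ, Fintype.card_fin, nsmul_eq_mul]
    nlinarith [hsum true]
  have hΔB : ε * ((N : ℝ) - 1) ≤ (dB wB : ℝ) := by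
    have h1 : (∑ v, ((colorNbr col false v).card : ℝ)) ≤ (N : ℝ) * (dB wB : ℝ) := by
      calc (∑ v, ((colorNbr col false v).card : ℝ)) ≤ ∑ _v : Fin N, (dB wB : ℝ) :=
            Finset.sum_le_sum fun v _ => hmaxB v
        _ = (N : ℝ) * (dB wB : ℝ) := by
            rw [Finset.sum_const, Finset.card_univ, Fintype.card_fin, nsmul_eq_mul]
    nlinarith [hsum false]
  by_cases hA : (N : ℝ) ≤ 4 * ((N : ℝ) - 1 - (dR vR : ℝ))
  · -- averaging over w, with A = colorNbr true vR
    by_contra hcon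
    push_neg at hcon
    have hlt : ∀ w : Fin N, ((colorNbr col true vR ∩ colorNbr col false w).card : ℝ)
        < ε / 4 * ((N : ℝ) - 1) := fun w => hcon vR w
    have hsum2 : (∑ w, ((colorNbr col false w ∩ colorNbr col true vR).card : ℝ))
        = ∑ u ∈ colorNbr col true vR, (dB u : ℝ) := by
      push_cast [← Nat.cast_sum]
      exact_mod_cast congrArg (Nat.cast (R := ℝ)) (sum_inter col false (colorNbr col true vR))
    have hlow : (dR vR : ℝ) * ((N : ℝ) - 1 - (dR vR : ℝ))
        ≤ ∑ u ∈ colorNbr col true vR, (dB u : ℝ) := by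
      calc (dR vR : ℝ) * ((N : ℝ) - 1 - (dR vR : ℝ))
          = ∑ _u ∈ colorNbr col true vR, ((N : ℝ) - 1 - (dR vR : ℝ)) := by
            rw [Finset.sum_const, nsmul_eq_mul]
        _ ≤ ∑ u ∈ colorNbr col true vR, (dB u : ℝ) := by
            refine Finset.sum_le_sum fun u _ => ?_
            have := hdeg u
            have := hmaxR u
            linarith
    have hup : (∑ w, ((colorNbr col false w ∩ colorNbr col true vR).card : ℝ))
        < (N : ℝ) * (ε / 4 * ((N : ℝ) - 1)) := by
      calc (∑ w, ((colorNbr col false w ∩ colorNbr col true vR).card : ℝ))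
          < ∑ _w : Fin N, (ε / 4 * ((N : ℝ) - 1)) := by
            refine Finset.sum_lt_sum_of_nonempty hNe fun w _ => ?_
            rw [Finset.inter_comm]
            exact hlt w
        _ = (N : ℝ) * (ε / 4 * ((N : ℝ) - 1)) := by
            rw [Finset.sum_const, Finset.card_univ, Fintype.card_fin, nsmul_eq_mul]
    rw [hsum2] at hup
    nlinarith [hlow, hup, hΔR, hA, hε0, hNpos]
  by_cases hB : (N : ℝ) ≤ 4 * ((N : ℝ) - 1 - (dB wB : ℝ))
  · by_contra hcon
    push_neg at hcon
    have hlt : ∀ v : Fin N, ((colorNbr col true v ∩ colorNbr col false wB).card : ℝ)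
        < ε / 4 * ((N : ℝ) - 1) := fun v => hcon v wB
    have hsum2 : (∑ v, ((colorNbr col true v ∩ colorNbr col false wB).card : ℝ))
        = ∑ u ∈ colorNbr col false wB, (dR u : ℝ) := by
      push_cast [← Nat.cast_sum]
      exact_mod_cast congrArg (Nat.cast (R := ℝ)) (sum_inter col true (colorNbr col false wB))
    have hlow : (dB wB : ℝ) * ((N : ℝ) - 1 - (dB wB : ℝ))
        ≤ ∑ u ∈ colorNbr col false wB, (dR u : ℝ) := by
      calc (dB wB : ℝ) * ((N : ℝ) - 1 - (dB wB : ℝ))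
          = ∑ _u ∈ colorNbr col false wB, ((N : ℝ) - 1 - (dB wB : ℝ)) := by
            rw [Finset.sum_const, nsmul_eq_mul]
        _ ≤ ∑ u ∈ colorNbr col false wB, (dR u : ℝ) := by
            refine Finset.sum_le_sum fun u _ => ?_
            have := hdeg u
            have := hmaxB u
            linarith
    have hup : (∑ v, ((colorNbr col true v ∩ colorNbr col false wB).card : ℝ))
        < (N : ℝ) * (ε / 4 * ((N : ℝ) - 1)) := by
      calc (∑ v, ((colorNbr col true v ∩ colorNbr col false wB).card : ℝ))
          < ∑ _v : Fin N, (ε / 4 * ((N : ℝ) - 1)) :=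
            Finset.sum_lt_sum_of_nonempty hNe fun v _ => hlt v
        _ = (N : ℝ) * (ε / 4 * ((N : ℝ) - 1)) := by
            rw [Finset.sum_const, Finset.card_univ, Fintype.card_fin, nsmul_eq_mul]
    rw [hsum2] at hup
    nlinarith [hlow, hup, hΔB, hB, hε0, hNpos]
  · push_neg at hA hB
    by_cases hN5 : (5 : ℝ) ≤ (N : ℝ)
    · -- large N: take vR, wB directly
      refine ⟨vR, wB, ?_⟩
      have hcard : (dR vR : ℝ) + (dB wB : ℝ) - (N : ℝ)
          ≤ ((colorNbr col true vR ∩ colorNbr col false wB).card : ℝ) := by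
        have h1 := Finset.card_union_add_card_inter (colorNbr col true vR) (colorNbr col false wB)
        have h2 : (colorNbr col true vR ∪ colorNbr col false wB).card ≤ N := by
          calc (colorNbr col true vR ∪ colorNbr col false wB).card
              ≤ (Finset.univ : Finset (Fin N)).card := Finset.card_le_univ _
            _ = N := by rw [Finset.card_univ, Fintype.card_fin]
        have h1' : ((colorNbr col true vR ∪ colorNbr col false wB).card : ℝ)
            + ((colorNbr col true vR ∩ colorNbr col false wB).card : ℝ)
            = (dR vR : ℝ) + (dB wB : ℝ) := by exact_mod_cast congrArg (Nat.cast (R := ℝ)) h1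
        have h2' : ((colorNbr col true vR ∪ colorNbr col false wB).card : ℝ) ≤ (N : ℝ) := by
          exact_mod_cast h2
        linarith
      have hεm : ε * ((N : ℝ) - 1) ≤ 1 / 2 * ((N : ℝ) - 1) := by nlinarith
      linarith
    · -- small N ≤ 4: get intersection of size ≥ 1
      push_neg at hN5
      have hN4 : (N : ℝ) ≤ 4 := by
        have : N < 5 := by exact_mod_cast hN5
        have : N ≤ 4 := by omega
        exact_mod_cast this
      have hedge : ∀ c : Bool, ∃ a b : Fin N, a ≠ b ∧ col s(a, b) = c := by
        intro c
        have hch : 1 ≤ N.choose 2 := by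
          rw [Nat.choose_two_right]
          rw [Nat.le_div_iff_mul_le (by norm_num)]
          have h2N : 2 ≤ N := hN2
          calc 1 * 2 = 2 * 1 := by ring
            _ ≤ N * (N - 1) := Nat.mul_le_mul h2N (by omega)
        · have h2 := hbal c
          have : (0 : ℝ) < (colorEdgeCount col c : ℝ) := by
            have : (1 : ℝ) ≤ (N.choose 2 : ℝ) := by exact_mod_cast hch
            nlinarith
          have hpos : 0 < colorEdgeCount col c := by exact_mod_cast this
          have hne : {e : Sym2 (Fin N) | ¬ e.IsDiag ∧ col e = c}.Nonempty := by
            rw [← Set.ncard_pos (Set.toFinite _)]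
            exact hpos
          obtain ⟨e, he⟩ := hne
          induction e using Sym2.ind with
          | _ a b =>
            refine ⟨a, b, ?_, he.2⟩
            intro hab
            exact he.1 (by rw [hab]; exact Sym2.isDiag_iff_proj_eq |>.mpr rfl)
      obtain ⟨v, w, hvw⟩ := exists_pos col (hedge true) (hedge false)
      refine ⟨v, w, ?_⟩
      have hc1 : (1 : ℝ) ≤ ((colorNbr col true v ∩ colorNbr col false w).card : ℝ) := by
        exact_mod_cast hvw
      nlinarith [hε0.le, hN1, hN4, hc1]
end

section
/- Let G be a graph and let H be obtained from G by deleting a vertex. If H has n vertices and degeneracy d ≥ 1, then r(G) ≤ 4·d·r(H). -/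
open Finset

section Aux

open Finset

variable {V : Type*}

lemma bool_resolve {a b c : Bool} (h1 : a ≠ c) (h2 : b ≠ c) : a = b := by
  revert h1 h2; cases a <;> cases b <;> cases c <;> decide

/-- Greedy embedding of a degenerate graph into a majority color inside `S`. -/
lemma embed_aux {W : Type*} [Fintype W] (Hg : SimpleGraph W) (d B N : ℕ) (hN : 0 < N)
    (hdeg : Degenerate Hg d) (col : Sym2 (Fin N) → Bool) (c : Bool) (S : Finset (Fin N))
    (hB : ∀ x ∈ S, (S.filter (fun y => y ≠ x ∧ col s(x, y) ≠ c)).card ≤ B)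
    (hS : Fintype.card W + d * B ≤ S.card) :
    ∃ f : W → Fin N, Function.Injective f ∧ (∀ u, f u ∈ S) ∧
      ∀ u u', Hg.Adj u u' → col s(f u, f u') = c := by
  classical
  suffices h : ∀ s : Finset W, ∃ f : W → Fin N, Set.InjOn f ↑s ∧ (∀ u ∈ s, f u ∈ S) ∧
      ∀ u ∈ s, ∀ u' ∈ s, Hg.Adj u u' → col s(f u, f u') = c by
    obtain ⟨f, h1, h2, h3⟩ := h Finset.univ
    refine ⟨f, fun a b hab => h1 (by simp) (by simp) hab, fun u => h2 u (by simp),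
      fun u u' h => h3 u (by simp) u' (by simp) h⟩
  intro s
  induction s using Finset.strongInduction with
  | _ s IH =>
  rcases s.eq_empty_or_nonempty with rfl | hne
  · exact ⟨fun _ => ⟨0, hN⟩, by simp, fun u hu => (Finset.notMem_empty u hu).elim,
      fun u hu => (Finset.notMem_empty u hu).elim⟩
  obtain ⟨u, hus, hud⟩ := hdeg (↑s) (by exact_mod_cast hne)
  rw [Finset.mem_coe] at hus
  set s' := s.erase u with hs'
  obtain ⟨f, hinj, hfS, hcol⟩ := IH s' (Finset.erase_ssubset hus)
  set nbrs := s'.filter (fun x => Hg.Adj u x) with hnbrs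
  have hnbrs_card : nbrs.card ≤ d := by
    have hsub : (↑nbrs : Set W) ⊆ {x ∈ (↑s : Set W) | Hg.Adj u x} := by
      intro x hx
      rw [Finset.mem_coe, hnbrs, Finset.mem_filter] at hx
      exact ⟨Finset.mem_coe.mpr (Finset.mem_of_mem_erase hx.1), hx.2⟩
    calc nbrs.card = (↑nbrs : Set W).ncard := (Set.ncard_coe_finset nbrs).symm
      _ ≤ {x ∈ (↑s : Set W) | Hg.Adj u x}.ncard := by
          exact Set.ncard_le_ncard hsub ((s.finite_toSet).subset (fun x hx => hx.1))
      _ ≤ d := hud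
  set bad := nbrs.biUnion (fun x => S.filter (fun y => y ≠ f x ∧ col s(f x, y) ≠ c)) with hbad
  have hbad_card : bad.card ≤ d * B := by
    calc bad.card ≤ ∑ x ∈ nbrs, (S.filter (fun y => y ≠ f x ∧ col s(f x, y) ≠ c)).card :=
          Finset.card_biUnion_le
      _ ≤ nbrs.card * B := by
          apply Finset.sum_le_card_nsmul
          intro x hx
          exact hB (f x) (hfS x (Finset.mem_filter.mp hx).1)
      _ ≤ d * B := Nat.mul_le_mul_right B hnbrs_card
  set used := s'.image f with hused
  have hused_card : used.card ≤ Fintype.card W - 1 := by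
    calc used.card ≤ s'.card := Finset.card_image_le
      _ = s.card - 1 := Finset.card_erase_of_mem hus
      _ ≤ Fintype.card W - 1 := by
          have := Finset.card_le_univ s
          omega
  have hWpos : 1 ≤ Fintype.card W := Fintype.card_pos_iff.mpr ⟨u⟩
  obtain ⟨w, hwS, hw⟩ : ∃ w ∈ S, w ∉ used ∪ bad := by
    by_contra h
    push_neg at h
    have hsub : S ⊆ used ∪ bad := h
    have := Finset.card_le_card hsub
    have := Finset.card_union_le used bad
    omega
  rw [Finset.mem_union] at hw
  push_neg at hw
  obtain ⟨hwu, hwb⟩ := hw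
  refine ⟨Function.update f u w, ?_, ?_, ?_⟩
  · intro a ha b hb hab
    rw [Finset.mem_coe] at ha hb
    by_cases hau : a = u <;> by_cases hbu : b = u
    · rw [hau, hbu]
    · exfalso
      rw [hau, Function.update_self, Function.update_of_ne hbu] at hab
      exact hwu (hab ▸ Finset.mem_image_of_mem f (Finset.mem_erase.mpr ⟨hbu, hb⟩))
    · exfalso
      rw [hbu, Function.update_self, Function.update_of_ne hau] at hab
      exact hwu (hab ▸ Finset.mem_image_of_mem f (Finset.mem_erase.mpr ⟨hau, ha⟩))
    · rw [Function.update_of_ne hau, Function.update_of_ne hbu] at hab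
      exact hinj (Finset.mem_coe.mpr (Finset.mem_erase.mpr ⟨hau, ha⟩))
        (Finset.mem_coe.mpr (Finset.mem_erase.mpr ⟨hbu, hb⟩)) hab
  · intro x hx
    by_cases hxu : x = u
    · rw [hxu, Function.update_self]; exact hwS
    · rw [Function.update_of_ne hxu]
      exact hfS x (Finset.mem_erase.mpr ⟨hxu, hx⟩)
  · intro a ha b hb hab
    have key : ∀ x ∈ nbrs, col s(f x, w) = c := by
      intro x hx
      have hfx : f x ∈ used := Finset.mem_image_of_mem f (Finset.mem_filter.mp hx).1
      have hwfx : w ≠ f x := fun h => hwu (h ▸ hfx)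
      have : w ∉ S.filter (fun y => y ≠ f x ∧ col s(f x, y) ≠ c) := by
        intro h; exact hwb (Finset.mem_biUnion.mpr ⟨x, hx, h⟩)
      rw [Finset.mem_filter] at this
      push_neg at this
      exact this hwS hwfx
    by_cases hau : a = u <;> by_cases hbu : b = u
    · exfalso; rw [hau, hbu] at hab; exact Hg.loopless.irrefl u hab
    · rw [hau, Function.update_self, Function.update_of_ne hbu]
      have hbn : b ∈ nbrs := Finset.mem_filter.mpr
        ⟨Finset.mem_erase.mpr ⟨hbu, hb⟩, hau ▸ hab⟩
      rw [Sym2.eq_swap]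
      exact key b hbn
    · rw [hbu, Function.update_self, Function.update_of_ne hau]
      have han : a ∈ nbrs := Finset.mem_filter.mpr
        ⟨Finset.mem_erase.mpr ⟨hau, ha⟩, (hbu ▸ hab).symm⟩
      exact key a han
    · rw [Function.update_of_ne hau, Function.update_of_ne hbu]
      exact hcol a (Finset.mem_erase.mpr ⟨hau, ha⟩) b (Finset.mem_erase.mpr ⟨hbu, hb⟩) hab

/-- Extending a monochromatic copy of `G - v` by an apex vertex. -/
lemma extend_aux (G : SimpleGraph V) (v : V) {N : ℕ}
    (col : Sym2 (Fin N) → Bool) (c : Bool) (x : Fin N) (T : Finset (Fin N))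
    (hx : ∀ y ∈ T, y ≠ x ∧ col s(x, y) = c)
    (f : {u : V // u ≠ v} → Fin N) (hinj : Function.Injective f) (hfT : ∀ u, f u ∈ T)
    (hcol : ∀ u u' : {u : V // u ≠ v}, G.Adj u.1 u'.1 → col s(f u, f u') = c) :
    HasMonoCopy G col c := by
  classical
  refine ⟨fun u => if h : u = v then x else f ⟨u, h⟩, ?_, ?_⟩
  · intro a b hab
    dsimp only at hab
    by_cases ha : a = v <;> by_cases hb : b = v
    · rw [ha, hb]
    · exfalso
      rw [dif_pos ha, dif_neg hb] at hab
      exact (hx _ (hfT ⟨b, hb⟩)).1 hab.symm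
    · exfalso
      rw [dif_neg ha, dif_pos hb] at hab
      exact (hx _ (hfT ⟨a, ha⟩)).1 hab
    · rw [dif_neg ha, dif_neg hb] at hab
      exact congrArg Subtype.val (hinj hab)
  · intro a b hab
    dsimp only
    by_cases ha : a = v <;> by_cases hb : b = v
    · exfalso; rw [ha, hb] at hab; exact G.loopless.irrefl v hab
    · rw [dif_pos ha, dif_neg hb]
      exact (hx _ (hfT ⟨b, hb⟩)).2
    · rw [dif_neg ha, dif_pos hb, Sym2.eq_swap]
      exact (hx _ (hfT ⟨a, ha⟩)).2
    · rw [dif_neg ha, dif_neg hb]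
      exact hcol ⟨a, ha⟩ ⟨b, hb⟩ hab

/-- Any set of at least `R` vertices contains a monochromatic copy of `Hg`,
when `R` is Ramsey for `Hg`. -/
lemma mono_in_subset {W : Type*} {N R : ℕ} (Hg : SimpleGraph W)
    (hR : ∀ col : Sym2 (Fin R) → Bool, ∃ c, HasMonoCopy Hg col c)
    (col : Sym2 (Fin N) → Bool) (T : Finset (Fin N)) (hT : R ≤ T.card) :
    ∃ c, ∃ f : W → Fin N, Function.Injective f ∧ (∀ u, f u ∈ T) ∧
      ∀ u u', Hg.Adj u u' → col s(f u, f u') = c := by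
  classical
  obtain ⟨T', hT'sub, hT'card⟩ := Finset.exists_subset_card_eq hT
  let e := T'.equivFinOfCardEq hT'card
  let g : Fin R → Fin N := fun i => (e.symm i : Fin N)
  have hg : Function.Injective g := fun i j h => e.symm.injective (Subtype.ext h)
  obtain ⟨c, f0, hf0inj, hf0col⟩ := hR (fun e => col (e.map g))
  refine ⟨c, g ∘ f0, hg.comp hf0inj, fun u => hT'sub (e.symm (f0 u)).2, fun u u' h => ?_⟩
  have := hf0col u u' h
  simpa [Sym2.map_pair_eq] using this

end Aux

theorem ramsey_le_degeneracy_bound {V : Type*} [Fintype V] (G : SimpleGraph V) (v : V)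
    (n d : ℕ) (hn : Nat.card {u : V // u ≠ v} = n)
    (hd : degeneracy (G.induce {u | u ≠ v}) = d) (hd1 : 1 ≤ d) :
    ramsey G ≤ 4 * d * ramsey (G.induce {u | u ≠ v}) := by
  classical
  set Hgr := G.induce {u | u ≠ v} with hHgr
  have hadj : ∀ a b : ↥{u : V | u ≠ v}, Hgr.Adj a b ↔ G.Adj a.1 b.1 := fun a b => Iff.rfl
  -- the vertex set of H is nonempty (otherwise degeneracy would be 0)
  have hWne : Nonempty (↥{u : V | u ≠ v}) := by
    by_contra h
    have hdeg0 : Degenerate Hgr 0 := by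
      intro s hs
      exact absurd (Nonempty.intro hs.choose) h
    have h0 : degeneracy Hgr = 0 := Nat.eq_zero_of_le_zero (Nat.sInf_le hdeg0)
    omega
  letI : Fintype (↥{u : V | u ≠ v}) := Fintype.ofFinite _
  have hcardW : Fintype.card (↥{u : V | u ≠ v}) = n := by
    rw [← Nat.card_eq_fintype_card]; exact hn
  have hdegen : Degenerate Hgr d := by
    have hmem : Degenerate Hgr (Nat.card (↥{u : V | u ≠ v})) := by
      intro s hs
      refine ⟨hs.choose, hs.choose_spec, ?_⟩
      calc {u ∈ s | Hgr.Adj hs.choose u}.ncard ≤ (Set.univ : Set (↥{u : V | u ≠ v})).ncard :=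
            Set.ncard_le_ncard (Set.subset_univ _) Set.finite_univ
        _ = Nat.card (↥{u : V | u ≠ v}) := by rw [Set.ncard_univ]
    have hne : {d' | Degenerate Hgr d'}.Nonempty := ⟨_, hmem⟩
    have hmem2 := Nat.sInf_mem hne
    have hdd : sInf {d' | Degenerate Hgr d'} = d := hd
    rwa [hdd] at hmem2
  by_cases hSH : {M | ∀ col : Sym2 (Fin M) → Bool, ∃ c, HasMonoCopy Hgr col c}.Nonempty
  swap
  · -- If no Ramsey number exists for H, none exists for G either and both sides are 0.
    have hSG : {M | ∀ col : Sym2 (Fin M) → Bool, ∃ c, HasMonoCopy G col c} = ∅ := by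
      rw [Set.eq_empty_iff_forall_notMem]
      intro M hM
      apply hSH
      refine ⟨M, fun col => ?_⟩
      obtain ⟨c, f, hinj, hcol⟩ := hM col
      exact ⟨c, fun u => f u.1, fun a b hab => Subtype.ext (hinj hab),
        fun a b hab => hcol a.1 b.1 ((hadj a b).mp hab)⟩
    have hzero : ramsey G = 0 := by rw [ramsey, hSG, Nat.sInf_empty]
    rw [hzero]
    exact Nat.zero_le _
  set R := ramsey Hgr with hR
  have hRmem : ∀ col : Sym2 (Fin R) → Bool, ∃ c, HasMonoCopy Hgr col c := Nat.sInf_mem hSH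
  have hnR : n ≤ R := by
    obtain ⟨c, f, hinj, -⟩ := hRmem (fun _ => true)
    have := Fintype.card_le_of_injective f hinj
    rwa [hcardW, Fintype.card_fin] at this
  have hn1 : 1 ≤ n := by
    rw [← hcardW]; exact Fintype.card_pos_iff.mpr hWne
  set N := 4 * d * R with hN
  suffices hNG : ∀ col : Sym2 (Fin N) → Bool, ∃ c, HasMonoCopy G col c from Nat.sInf_le hNG
  intro col
  have hR1 : 1 ≤ R := le_trans hn1 hnR
  have hN4 : 4 ≤ N := by
    rw [hN]
    calc 4 = 4 * 1 * 1 := by ring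
      _ ≤ 4 * d * R := Nat.mul_le_mul (Nat.mul_le_mul (le_refl 4) hd1) hR1
  have hN0 : 0 < N := by omega
  set v0 : Fin N := ⟨0, hN0⟩ with hv0
  -- a majority color at v0
  have hdisj : Disjoint (colorNbr col true v0) (colorNbr col false v0) := by
    rw [Finset.disjoint_left]
    intro a ha hb
    rw [colorNbr, Finset.mem_filter] at ha hb
    rw [ha.2.2] at hb
    exact Bool.true_eq_false.mp hb.2.2
  have hunion : colorNbr col true v0 ∪ colorNbr col false v0 = Finset.univ.erase v0 := by
    ext a
    simp only [colorNbr, Finset.mem_union, Finset.mem_filter, Finset.mem_erase,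
      Finset.mem_univ, true_and, and_true]
    cases h : col s(v0, a) <;> tauto
  have hsum : (colorNbr col true v0).card + (colorNbr col false v0).card = N - 1 := by
    rw [← Finset.card_union_of_disjoint hdisj, hunion,
      Finset.card_erase_of_mem (Finset.mem_univ v0), Finset.card_univ, Fintype.card_fin]
  obtain ⟨c, hc⟩ : ∃ c, 2 * d * R ≤ (colorNbr col c v0).card := by
    by_contra h
    push_neg at h
    have h1 := h true
    have h2 := h false
    have h3 : N = 2 * d * R + 2 * d * R := by rw [hN]; ring
    omega
  set S := colorNbr col c v0 with hS
  have hSmem : ∀ y ∈ S, y ≠ v0 ∧ col s(v0, y) = c := by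
    intro y hy
    rw [hS, colorNbr, Finset.mem_filter] at hy
    exact hy.2
  by_cases hbig : ∃ w ∈ S, R ≤ (S.filter (fun y => y ≠ w ∧ col s(w, y) ≠ c)).card
  · obtain ⟨w, hwS, hw⟩ := hbig
    set T := S.filter (fun y => y ≠ w ∧ col s(w, y) ≠ c) with hT
    obtain ⟨c₀, f, hinj, hfT, hcol⟩ := mono_in_subset Hgr hRmem col T hw
    by_cases hc₀ : c₀ = c
    · subst hc₀
      exact ⟨c₀, extend_aux G v col c₀ v0 S hSmem f hinj
        (fun u => Finset.mem_of_mem_filter _ (hfT u))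
        (fun u u' h => hcol u u' ((hadj u u').mpr h))⟩
    · refine ⟨c₀, extend_aux G v col c₀ w T ?_ f hinj hfT
        (fun u u' h => hcol u u' ((hadj u u').mpr h))⟩
      intro y hy
      rw [hT, Finset.mem_filter] at hy
      exact ⟨hy.2.1, bool_resolve hy.2.2 hc₀⟩
  · push_neg at hbig
    have hScard : Fintype.card (↥{u : V | u ≠ v}) + d * (R - 1) ≤ S.card := by
      have h1 : n + d * (R - 1) ≤ 2 * d * R := by
        have h2 : d * (R - 1) ≤ d * R := Nat.mul_le_mul_left d (Nat.sub_le R 1)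
        have h3 : n ≤ d * R := le_trans hnR (Nat.le_mul_of_pos_left R hd1)
        have h4 : 2 * d * R = d * R + d * R := by ring
        omega
      rw [hcardW]
      exact le_trans h1 hc
    obtain ⟨f, hinj, hfS, hcol⟩ := embed_aux Hgr d (R - 1) N hN0 hdegen col c S
      (fun x hx => by have := hbig x hx; omega) hScard
    exact ⟨c, extend_aux G v col c v0 S hSmem f hinj hfS
      (fun u u' h => hcol u u' ((hadj u u').mpr h))⟩
end

section
/- Let n ≥ 4^k and let H'_{k,n} be the disjoint union of n/k copies of K_k (assume k divides n). Then r(H'_{k,n}) ≤ 3n. -/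
open Finset

def MonoOn {N : ℕ} (col : Sym2 (Fin N) → Bool) (T : Finset (Fin N)) (c : Bool) : Prop :=
  ∀ u ∈ T, ∀ v ∈ T, u ≠ v → col s(u, v) = c

lemma es_aux {N : ℕ} (col : Sym2 (Fin N) → Bool) :
    ∀ m r b, r + b ≤ m → ∀ S : Finset (Fin N), 2 ^ (r + b) ≤ S.card →
    (∃ T ⊆ S, T.card = r ∧ MonoOn col T true) ∨
    (∃ T ⊆ S, T.card = b ∧ MonoOn col T false) := by
  intro m
  induction m with
  | zero =>
    intro r b hrb S _
    left
    refine ⟨∅, empty_subset _, ?_, ?_⟩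
    · simp; omega
    · intro u hu; simp at hu
  | succ m ih =>
    intro r b hrb S hS
    match r, b with
    | 0, b => left; exact ⟨∅, empty_subset _, rfl, by intro u hu; simp at hu⟩
    | r + 1, 0 => right; exact ⟨∅, empty_subset _, rfl, by intro u hu; simp at hu⟩
    | r + 1, b + 1 =>
      have hpos : 0 < S.card := lt_of_lt_of_le (Nat.pow_pos (by norm_num : 0 < 2)) hS
      obtain ⟨v, hv⟩ := card_pos.mp hpos
      set R := (S.erase v).filter (fun u => col s(v, u) = true) with hRdef
      set B := (S.erase v).filter (fun u => ¬ col s(v, u) = true) with hBdef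
      have hRB : R.card + B.card = S.card - 1 := by
        rw [hRdef, hBdef, card_filter_add_card_filter_not, card_erase_of_mem hv]
      have e1 : r + 1 + (b + 1) = (r + (b + 1)) + 1 := by omega
      rw [e1, pow_succ] at hS
      have e2 : (2:ℕ) ^ (r + (b + 1)) = 2 ^ (r + 1 + b) := by ring_nf
      have hbig : 2 ^ (r + (b + 1)) ≤ R.card ∨ 2 ^ (r + 1 + b) ≤ B.card := by
        by_contra h
        push_neg at h
        omega
      rcases hbig with hR | hB
      · rcases ih r (b + 1) (by omega) R hR with ⟨T, hTR, hTc, hTm⟩ | ⟨T, hTR, hTc, hTm⟩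
        · left
          have hvT : v ∉ T := fun h => (mem_erase.mp (mem_of_mem_filter _ (hTR h))).1 rfl
          refine ⟨insert v T, ?_, ?_, ?_⟩
          · intro x hx
            rcases mem_insert.mp hx with rfl | hx
            · exact hv
            · exact mem_of_mem_erase (mem_of_mem_filter _ (hTR hx))
          · rw [card_insert_of_notMem hvT, hTc]
          · intro u hu w hw huw
            rcases mem_insert.mp hu with hu' | hu' <;> rcases mem_insert.mp hw with hw' | hw'
            · exact absurd (hu'.trans hw'.symm) huw
            · subst hu'; exact (mem_filter.mp (hTR hw')).2
            · subst hw'; rw [Sym2.eq_swap]; exact (mem_filter.mp (hTR hu')).2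
            · exact hTm u hu' w hw' huw
        · right
          exact ⟨T, fun x hx => mem_of_mem_erase (mem_of_mem_filter _ (hTR hx)), hTc, hTm⟩
      · rcases ih (r + 1) b (by omega) B hB with ⟨T, hTB, hTc, hTm⟩ | ⟨T, hTB, hTc, hTm⟩
        · left
          exact ⟨T, fun x hx => mem_of_mem_erase (mem_of_mem_filter _ (hTB hx)), hTc, hTm⟩
        · right
          have hvT : v ∉ T := fun h => (mem_erase.mp (mem_of_mem_filter _ (hTB h))).1 rfl
          refine ⟨insert v T, ?_, ?_, ?_⟩
          · intro x hx
            rcases mem_insert.mp hx with rfl | hx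
            · exact hv
            · exact mem_of_mem_erase (mem_of_mem_filter _ (hTB hx))
          · rw [card_insert_of_notMem hvT, hTc]
          · intro u hu w hw huw
            rcases mem_insert.mp hu with hu' | hu' <;> rcases mem_insert.mp hw with hw' | hw'
            · exact absurd (hu'.trans hw'.symm) huw
            · subst hu'; exact Bool.not_eq_true _ |>.mp (mem_filter.mp (hTB hw')).2
            · subst hw'; rw [Sym2.eq_swap]; exact Bool.not_eq_true _ |>.mp (mem_filter.mp (hTB hu')).2
            · exact hTm u hu' w hw' huw

lemma es {N k : ℕ} (col : Sym2 (Fin N) → Bool) (S : Finset (Fin N)) (hS : 4 ^ k ≤ S.card) :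
    ∃ c, ∃ T ⊆ S, T.card = k ∧ MonoOn col T c := by
  have h4 : (4:ℕ) ^ k = 2 ^ (k + k) := by
    rw [show (4:ℕ) = 2 ^ 2 from rfl, ← pow_mul]; ring_nf
  rcases es_aux col (k + k) k k le_rfl S (h4 ▸ hS) with ⟨T, h1, h2, h3⟩ | ⟨T, h1, h2, h3⟩
  · exact ⟨true, T, h1, h2, h3⟩
  · exact ⟨false, T, h1, h2, h3⟩
lemma greedy {N k : ℕ} (col : Sym2 (Fin N) → Bool) :
    ∀ j (S : Finset (Fin N)), 4 ^ k + j * k ≤ S.card + k →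
    ∃ (T : Fin j → Finset (Fin N)) (c : Fin j → Bool),
      (∀ i, T i ⊆ S ∧ (T i).card = k ∧ MonoOn col (T i) (c i)) ∧
      ∀ i i', i ≠ i' → Disjoint (T i) (T i') := by
  intro j
  induction j with
  | zero =>
    intro S _
    exact ⟨Fin.elim0, Fin.elim0, fun i => i.elim0, fun i => i.elim0⟩
  | succ j ih =>
    intro S hS
    have hkS : 4 ^ k ≤ S.card := by nlinarith [Nat.one_le_iff_ne_zero.mpr (pow_ne_zero k (by norm_num : (4:ℕ) ≠ 0))]
    obtain ⟨c0, T0, hT0S, hT0c, hT0m⟩ := es col S hkS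
    have hkle : k ≤ S.card := le_trans (le_trans (Nat.le_of_lt (Nat.lt_two_pow_self (n := k)))
      (Nat.pow_le_pow_left (by norm_num) k)) hkS
    have hcard : (S \ T0).card = S.card - k := by rw [card_sdiff_of_subset hT0S, hT0c]
    have hmul : (j + 1) * k = j * k + k := by ring
    obtain ⟨T', c', hT', hdisj'⟩ := ih (S \ T0) (by omega)
    refine ⟨Fin.cons T0 T', Fin.cons c0 c', ?_, ?_⟩
    · intro i
      induction i using Fin.cases with
      | zero => simpa using ⟨hT0S, hT0c, hT0m⟩
      | succ i =>
        obtain ⟨h1, h2, h3⟩ := hT' i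
        exact ⟨by simpa using h1.trans (sdiff_subset), by simpa using h2, by simpa using h3⟩
    · intro i i' hne
      induction i using Fin.cases with
      | zero =>
        induction i' using Fin.cases with
        | zero => exact absurd rfl hne
        | succ i' =>
          simp only [Fin.cons_zero, Fin.cons_succ]
          exact (disjoint_sdiff.mono_right (hT' i').1)
      | succ i =>
        induction i' using Fin.cases with
        | zero =>
          simp only [Fin.cons_zero, Fin.cons_succ]
          exact (disjoint_sdiff.mono_right (hT' i).1).symm
        | succ i' =>
          simp only [Fin.cons_succ]
          exact hdisj' i i' (fun h => hne (by rw [h]))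

theorem ramsey_disjoint_cliques (k n : ℕ) (hk : 0 < k) (hdvd : k ∣ n) (hn : 4 ^ k ≤ n) :
    ramsey (Hgraph' k n) ≤ 3 * n := by
  apply Nat.sInf_le
  intro col
  set m := n / k with hm
  have hmk : m * k = n := Nat.div_mul_cancel hdvd
  obtain ⟨T, c, hT, hdisj⟩ := greedy (k := k) col (2 * m) (univ : Finset (Fin (3 * n))) (by
    rw [card_univ, Fintype.card_fin]
    have h2mk : 2 * m * k = 2 * n := by rw [mul_assoc, hmk]
    omega)
  obtain ⟨b, hb⟩ : ∃ b, m ≤ (univ.filter (fun i => c i = b)).card := by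
    by_contra h
    push_neg at h
    have h1 := h true
    have h2 := h false
    have hsplit := card_filter_add_card_filter_not
      (s := (univ : Finset (Fin (2 * m)))) (p := fun i => c i = true)
    have heq : (univ.filter (fun i : Fin (2 * m) => ¬ c i = true))
        = univ.filter (fun i => c i = false) := by
      apply filter_congr; intro i _; simp [Bool.not_eq_true]
    rw [heq, card_univ, Fintype.card_fin] at hsplit
    omega
  obtain ⟨A, hA, hAcard⟩ := Finset.exists_subset_card_eq hb
  set gg : Fin m → Fin (2 * m) := fun i => (A.orderIsoOfFin hAcard i : Fin (2 * m)) with hggdef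
  have hgginj : Function.Injective gg := fun i j h =>
    (A.orderIsoOfFin hAcard).injective (Subtype.coe_injective h)
  have hggb : ∀ i, c (gg i) = b := by
    intro i
    have := hA (A.orderIsoOfFin hAcard i).prop
    exact (mem_filter.mp this).2
  set F : Fin m → Fin k → Fin (3 * n) :=
    fun i r => ((T (gg i)).orderIsoOfFin ((hT (gg i)).2.1) r : Fin (3 * n)) with hFdef
  have hFmem : ∀ i r, F i r ∈ T (gg i) :=
    fun i r => ((T (gg i)).orderIsoOfFin ((hT (gg i)).2.1) r).prop
  have hFinj : ∀ i, Function.Injective (F i) := fun i r r' h =>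
    ((T (gg i)).orderIsoOfFin ((hT (gg i)).2.1)).injective (Subtype.coe_injective h)
  have hdivlt : ∀ v : Fin n, (v : ℕ) / k < m := fun v =>
    (Nat.div_lt_iff_lt_mul hk).mpr (by rw [hmk]; exact v.isLt)
  set f : Fin n → Fin (3 * n) :=
    fun v => F ⟨(v : ℕ) / k, hdivlt v⟩ ⟨(v : ℕ) % k, Nat.mod_lt _ hk⟩ with hfdef
  have hfinj : Function.Injective f := by
    intro u v hfeq
    by_cases hdiv : (u : ℕ) / k = (v : ℕ) / k
    · have hie : (⟨(u : ℕ) / k, hdivlt u⟩ : Fin m) = ⟨(v : ℕ) / k, hdivlt v⟩ :=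
        Fin.mk_eq_mk.mpr hdiv
      have hfeq' : F ⟨(u : ℕ) / k, hdivlt u⟩ ⟨(u : ℕ) % k, Nat.mod_lt _ hk⟩
          = F ⟨(v : ℕ) / k, hdivlt v⟩ ⟨(v : ℕ) % k, Nat.mod_lt _ hk⟩ := hfeq
      rw [hie] at hfeq'
      have hmodeq : (u : ℕ) % k = (v : ℕ) % k := Fin.mk_eq_mk.mp (hFinj _ hfeq')
      have : (u : ℕ) = (v : ℕ) := by
        rw [← Nat.div_add_mod (u : ℕ) k, ← Nat.div_add_mod (v : ℕ) k, hdiv, hmodeq]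
      exact Fin.ext this
    · exfalso
      have hne : (⟨(u : ℕ) / k, hdivlt u⟩ : Fin m) ≠ ⟨(v : ℕ) / k, hdivlt v⟩ :=
        fun h => hdiv (Fin.mk_eq_mk.mp h)
      have hggne : gg ⟨(u : ℕ) / k, hdivlt u⟩ ≠ gg ⟨(v : ℕ) / k, hdivlt v⟩ :=
        fun h => hne (hgginj h)
      have hd := hdisj _ _ hggne
      have h1 : f u ∈ T (gg ⟨(u : ℕ) / k, hdivlt u⟩) := hFmem _ _
      have h2 : f u ∈ T (gg ⟨(v : ℕ) / k, hdivlt v⟩) := hfeq ▸ hFmem _ _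
      exact Finset.disjoint_left.mp hd h1 h2
  refine ⟨b, f, hfinj, ?_⟩
  rintro u v ⟨hne, hdiv⟩
  have hie : (⟨(u : ℕ) / k, hdivlt u⟩ : Fin m) = ⟨(v : ℕ) / k, hdivlt v⟩ :=
    Fin.mk_eq_mk.mpr hdiv
  have h1 : f u ∈ T (gg ⟨(u : ℕ) / k, hdivlt u⟩) := hFmem _ _
  have h2 : f v ∈ T (gg ⟨(u : ℕ) / k, hdivlt u⟩) := by
    have : f v ∈ T (gg ⟨(v : ℕ) / k, hdivlt v⟩) := hFmem _ _
    rwa [hie]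
  have hfne : f u ≠ f v := fun h => hne (hfinj h)
  have := (hT (gg ⟨(u : ℕ) / k, hdivlt u⟩)).2.2 (f u) h1 (f v) h2 hfne
  rw [this, hggb]
end

section
/- For every (n+1)-vertex graph G and every graph H obtained from G by deleting a single vertex, r(G) ≤ 2n·r(H). -/
open Finset

lemma greedy_clique {N : ℕ} (r : ℕ) (hr : 1 ≤ r) (col : Sym2 (Fin N) → Bool) (c : Bool)
    (A : Finset (Fin N))
    (hdeg : ∀ w ∈ A, (A.filter fun u => u ≠ w ∧ col s(w, u) = !c).card < r) :
    ∀ m : ℕ, m * r ≤ A.card → ∃ s : Finset (Fin N), s ⊆ A ∧ s.card = m ∧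
      ∀ x ∈ s, ∀ y ∈ s, x ≠ y → col s(x, y) = c := by
  intro m
  induction m with
  | zero => intro _; exact ⟨∅, by simp⟩
  | succ m ih =>
    intro hm
    obtain ⟨s, hsA, hcard, hmono⟩ := ih (le_trans (by nlinarith) hm)
    set F : Finset (Fin N) :=
      s ∪ s.biUnion (fun w => A.filter fun u => u ≠ w ∧ col s(w, u) = !c) with hF
    have hFcard : F.card ≤ m * r := by
      calc F.card ≤ s.card + (s.biUnion (fun w => A.filter fun u => u ≠ w ∧ col s(w, u) = !c)).card :=
            card_union_le _ _
        _ ≤ m + ∑ w ∈ s, (A.filter fun u => u ≠ w ∧ col s(w, u) = !c).card := by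
            rw [hcard]; exact Nat.add_le_add_left (card_biUnion_le) m
        _ ≤ m + ∑ w ∈ s, (r - 1) := by
            apply Nat.add_le_add_left
            apply Finset.sum_le_sum
            intro w hw
            exact Nat.le_sub_one_of_lt (hdeg w (hsA hw))
        _ ≤ m + m * (r - 1) := by rw [Finset.sum_const, hcard]; simp
        _ ≤ m * r := by
            cases r with
            | zero => omega
            | succ r => rw [Nat.succ_sub_one]; nlinarith
    have hlt : F.card < A.card := lt_of_le_of_lt hFcard (lt_of_lt_of_le (by nlinarith) hm)
    have : ¬ A ⊆ F := fun h => absurd (card_le_card h) (by omega)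
    obtain ⟨u, huA, huF⟩ := Finset.not_subset.mp this
    have hus : u ∉ s := fun h => huF (Finset.mem_union_left _ h)
    have hkey : ∀ y ∈ s, col s(y, u) = c := by
      intro y hy
      have hne : col s(y, u) = !c → False := fun hcol =>
        huF (Finset.mem_union_right _ (Finset.mem_biUnion.mpr
          ⟨y, hy, Finset.mem_filter.mpr ⟨huA, fun h => hus (h ▸ hy), hcol⟩⟩))
      cases hv : col s(y, u) <;> cases c <;> simp_all
    refine ⟨insert u s, Finset.insert_subset huA hsA, by
        rw [Finset.card_insert_of_notMem hus, hcard], ?_⟩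
    intro x hx y hy hxy
    rcases Finset.mem_insert.mp hx with hxu | hx <;>
      rcases Finset.mem_insert.mp hy with hyu | hy
    · exact absurd (hxu.trans hyu.symm) hxy
    · rw [hxu, Sym2.eq_swap]; exact hkey y hy
    · rw [hyu]; exact hkey x hx
    · exact hmono x hx y hy hxy

theorem cfs_linear_bound (n : ℕ) (hn : 1 ≤ n) (G : SimpleGraph (Fin (n + 1)))
    (v : Fin (n + 1)) :
    ramsey G ≤ 2 * n * ramsey (G.induce {u | u ≠ v}) := by
  classical
  set H := G.induce {u | u ≠ v} with hH
  set setH := {N | ∀ col : Sym2 (Fin N) → Bool, ∃ c : Bool, HasMonoCopy H col c} with hsetH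
  set setG := {N | ∀ col : Sym2 (Fin N) → Bool, ∃ c : Bool, HasMonoCopy G col c} with hsetG
  have hsub : setG ⊆ setH := by
    intro N hN col
    obtain ⟨c, f, hinj, hadj⟩ := hN col
    exact ⟨c, f ∘ Subtype.val, hinj.comp Subtype.val_injective,
      fun a b hab => hadj ↑a ↑b hab⟩
  rcases Set.eq_empty_or_nonempty setH with hemp | hne
  · have : setG = ∅ := Set.eq_empty_of_subset_empty (hemp ▸ hsub)
    show sInf setG ≤ _
    rw [this, Nat.sInf_empty]
    exact Nat.zero_le _
  · set r := ramsey H with hr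
    have hrmem : r ∈ setH := Nat.sInf_mem hne
    have hr1 : 1 ≤ r := by
      by_contra hr0
      have hr0 : r = 0 := by omega
      have h0 : (0 : ℕ) ∈ setH := hr0 ▸ hrmem
      obtain ⟨c, f, -, -⟩ := h0 (fun _ => true)
      obtain ⟨u, hu⟩ := Fintype.exists_ne_of_one_lt_card (by simp; omega) v
      exact (f ⟨u, hu⟩).elim0
    have hNmem : 2 * n * r ∈ setG := by
      intro col
      have hNpos : 0 < 2 * n * r := by positivity
      let v0 : Fin (2 * n * r) := ⟨0, hNpos⟩
      -- partition the other vertices by color towards v0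
      have hdisj : Disjoint (colorNbr col true v0) (colorNbr col false v0) := by
        rw [Finset.disjoint_left]
        intro u hu hu'
        simp only [colorNbr, mem_filter] at hu hu'
        simp [hu.2.2] at hu'
      have hunion : colorNbr col true v0 ∪ colorNbr col false v0
          = Finset.univ.filter (· ≠ v0) := by
        ext u
        simp only [colorNbr, mem_union, mem_filter, mem_univ, true_and]
        cases h : col s(v0, u) <;> tauto
      have hcount : (colorNbr col true v0).card + (colorNbr col false v0).card + 1
          = 2 * n * r := by
        have := Finset.card_union_of_disjoint hdisj
        rw [hunion] at this
        rw [← this]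
        rw [Finset.filter_ne', Finset.card_erase_of_mem (Finset.mem_univ _)]
        simp
        omega
      have hbig : ∃ c : Bool, n * r ≤ (colorNbr col c v0).card := by
        by_contra hno
        push_neg at hno
        have h1 := hno true
        have h2 := hno false
        have : 2 * n * r = 2 * (n * r) := by ring
        omega
      obtain ⟨c, hAcard⟩ := hbig
      set A := colorNbr col c v0 with hAdef
      have hv0A : v0 ∉ A := by simp [hAdef, colorNbr]
      have hcolA : ∀ u ∈ A, col s(v0, u) = c := by
        intro u hu; exact (Finset.mem_filter.mp hu).2.2
      by_cases hcase : ∃ w ∈ A, r ≤ (A.filter fun u => u ≠ w ∧ col s(w, u) = !c).card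
      · -- case (i): a vertex with many opposite-color neighbors
        obtain ⟨w, hwA, hBr⟩ := hcase
        set B := A.filter fun u => u ≠ w ∧ col s(w, u) = !c with hBdef
        obtain ⟨C, hCB, hCcard⟩ := Finset.exists_subset_card_eq hBr
        let e := C.orderIsoOfFin hCcard
        let g : Fin r → Fin (2 * n * r) := fun i => (e i : Fin (2 * n * r))
        have hg : Function.Injective g :=
          fun a b hab => e.injective (Subtype.val_injective hab)
        have hgB : ∀ i, g i ∈ B := fun i => hCB (e i).2
        let col' : Sym2 (Fin r) → Bool := fun s => col (s.map g)
        obtain ⟨c', fH, hfinj, hfadj⟩ := hrmem col'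
        let a : Fin (2 * n * r) := if c' = c then v0 else w
        have hga : ∀ i, g i ≠ a := by
          intro i
          by_cases hc' : c' = c
          · simp only [a, if_pos hc']
            intro h
            exact hv0A (h ▸ (Finset.mem_filter.mp (hgB i)).1)
          · simp only [a, if_neg hc']
            exact (Finset.mem_filter.mp (hgB i)).2.1
        refine ⟨c', fun u => if h : u = v then a else g (fH ⟨u, h⟩), ?_, ?_⟩
        · intro u1 u2 heq
          by_cases h1 : u1 = v <;> by_cases h2 : u2 = v <;>
            simp only [dif_pos, dif_neg, h1, h2] at heq
          · rw [h1, h2]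
          · exact absurd heq.symm (hga _)
          · exact absurd heq (hga _)
          · have := hfinj (hg heq)
            simpa using congrArg Subtype.val this
        · intro u1 u2 hadj
          dsimp only
          have hne12 := hadj.ne
          have key : ∀ x : Fin r, col s(a, g x) = c' := by
            intro x
            by_cases hc' : c' = c
            · simp only [a, if_pos hc']
              rw [hc']
              exact hcolA _ (Finset.mem_filter.mp (hgB x)).1
            · simp only [a, if_neg hc']
              have hcx := (Finset.mem_filter.mp (hgB x)).2.2
              have : c' = !c := by cases c <;> cases c' <;> simp_all
              rw [this]
              exact hcx
          by_cases h1 : u1 = v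
          · by_cases h2 : u2 = v
            · exact absurd (h1.trans h2.symm) hne12
            · rw [dif_pos h1, dif_neg h2]; exact key _
          · by_cases h2 : u2 = v
            · rw [dif_neg h1, dif_pos h2, Sym2.eq_swap]; exact key _
            · rw [dif_neg h1, dif_neg h2]
              have hadj' : H.Adj ⟨u1, h1⟩ ⟨u2, h2⟩ := hadj
              have := hfadj _ _ hadj'
              simpa [col', Sym2.map_pair_eq] using this
      · -- case (ii): greedy monochromatic clique
        push_neg at hcase
        obtain ⟨s, hsA, hscard, hmono⟩ :=
          greedy_clique r hr1 col c A hcase n (by omega)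
        let e := s.orderIsoOfFin hscard
        have hcardS : Fintype.card ↥{u : Fin (n+1) | u ≠ v} = n := by
          simp; rw [Finset.filter_not, Finset.card_sdiff_of_subset (Finset.filter_subset _ _)]; simp [Finset.filter_eq']
        let eqv : ↥{u : Fin (n+1) | u ≠ v} ≃ Fin n := Fintype.equivFinOfCardEq hcardS
        let g : ↥{u : Fin (n+1) | u ≠ v} → Fin (2 * n * r) :=
          fun x => (e (eqv x) : Fin (2 * n * r))
        have hg : Function.Injective g :=
          fun x y h => eqv.injective (e.injective (Subtype.val_injective h))
        have hgs : ∀ x, g x ∈ s := fun x => (e (eqv x)).2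
        refine ⟨c, fun u => if h : u = v then v0 else g ⟨u, h⟩, ?_, ?_⟩
        · intro u1 u2 heq
          by_cases h1 : u1 = v <;> by_cases h2 : u2 = v <;>
            simp only [dif_pos, dif_neg, h1, h2] at heq
          · rw [h1, h2]
          · exact absurd (heq ▸ hv0A) (fun h => h (hsA (hgs _)))
          · exact absurd (heq ▸ hv0A) (fun h => h (hsA (hgs _)))
          · have := hg heq
            simpa using congrArg Subtype.val this
        · intro u1 u2 hadj
          dsimp only
          have hne12 := hadj.ne
          by_cases h1 : u1 = v
          · by_cases h2 : u2 = v
            · exact absurd (h1.trans h2.symm) hne12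
            · rw [dif_pos h1, dif_neg h2]; exact hcolA _ (hsA (hgs _))
          · by_cases h2 : u2 = v
            · rw [dif_neg h1, dif_pos h2, Sym2.eq_swap]; exact hcolA _ (hsA (hgs _))
            · rw [dif_neg h1, dif_neg h2]
              refine hmono _ (hgs _) _ (hgs _) ?_
              exact fun h => hne12 (congrArg Subtype.val (hg h))
    calc ramsey G ≤ 2 * n * r := Nat.sInf_le hNmem
      _ = 2 * n * ramsey H := by rw [hr]
end
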